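/- Irreducible quaternionic group actions give tight frames: let G be a finite group and ρ : G → ℍ^{d×d} a group homomorphism into unitary quaternionic matrices (ρ(g)ᴴ·ρ(g) = I_d for all g). Suppose the action is irreducible: for every nonzero v ∈ ℍ^d, the orbit {ρ(g)·v : g ∈ G} spans ℍ^d under right quaternionic scalar multiplication (its span as a right ℍ-submodule is all of ℍ^d). Then for every nonzero v ∈ ℍ^d the orbit (ρ(g)·v)_{g∈G} is a tight frame: for all x ∈ ℍ^d, ∑_{g∈G} (ρ(g)·v)·⟨x, ρ(g)·v⟩ = (|G|·‖v‖²/d)·x. -/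

import Mathlib

/-!
The frame operator `S = ∑_g u_g u_gᴴ` of the orbit `u_g = ρ(g) v` is Hermitian and commutes
with every `ρ(h)`, since `u_{hg} = ρ(h) u_g` and `ρ(h)ᴴ = ρ(h⁻¹)`. Viewing `ℍ^d` as the real
inner product space `ℝ^{4d}`, `S` is a symmetric real operator and so has a real eigenvalue `μ`.
Real scalars are central in `ℍ`, so the `μ`-eigenspace is a right `ℍ`-submodule stable under
`ρ`; by irreducibility it is everything, i.e. `S = μ I`. Taking traces,
`d μ = ∑_g ‖ρ(g) v‖² = |G| ‖v‖²`.
-/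

open Quaternion Matrix BigOperators

/-- Euclidean inner product on `ℍ^d`: `⟨v,w⟩ = ∑ i, conj (w i) * v i`
(linear in the first variable). -/
noncomputable def qip {d : ℕ} (v w : Fin d → ℍ[ℝ]) : ℍ[ℝ] :=
  ∑ i, star (w i) * v i

/-- Squared Euclidean norm on `ℍ^d`, a nonnegative real. -/
noncomputable def nsq {d : ℕ} (v : Fin d → ℍ[ℝ]) : ℝ :=
  ∑ i, Quaternion.normSq (v i)

theorem MonoidHom.commute_sum_mul_mul_inv {G M : Type*} [Group G] [Fintype G] [Semiring M]
    (ρ : G →* M) (P : M) (h : G) : Commute (ρ h) (∑ g, ρ g * P * ρ g⁻¹) := by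
  have hshift : ∀ g, ρ h * (ρ g * P * ρ g⁻¹) = ρ (h * g) * P * ρ (h * g)⁻¹ * ρ h := fun g => by
    simp only [_root_.mul_inv_rev, map_mul, mul_assoc]
    rw [← map_mul ρ h⁻¹ h, inv_mul_cancel, map_one, mul_one]
  rw [Commute, SemiconjBy, Finset.mul_sum, Finset.sum_mul]
  simp_rw [hshift]
  exact Fintype.sum_equiv (Equiv.mulLeft h) _ _ fun _ => rfl

namespace Quaternion

variable {R : Type*} [CommRing R]

theorem coe_sum {ι : Type*} (s : Finset ι) (f : ι → R) :
    ((∑ i ∈ s, f i : R) : ℍ[R]) = ∑ i ∈ s, (f i : ℍ[R]) := by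
  simpa only [algebraMap_def] using map_sum (algebraMap R ℍ[R]) f s

theorem re_sum {ι : Type*} (s : Finset ι) (f : ι → ℍ[R]) :
    (∑ i ∈ s, f i).re = ∑ i ∈ s, (f i).re :=
  map_sum (QuaternionAlgebra.reₗ (R := R) (-1) 0 (-1)) f s

theorem re_mul_comm (a b : ℍ[R]) : (a * b).re = (b * a).re := by
  simp only [re_mul]
  ring

theorem re_dotProduct_comm {n : Type*} [Fintype n] (a b : n → ℍ[R]) :
    (a ⬝ᵥ b).re = (b ⬝ᵥ a).re := by
  simp only [dotProduct, re_sum, re_mul_comm (a _)]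

end Quaternion

namespace Matrix

variable {n R ι : Type*} [Fintype ι]

def frameOperator [Semiring R] [Star R] (u : ι → n → R) : Matrix n n R :=
  ∑ g, vecMulVec (u g) (star (u g))

theorem isHermitian_frameOperator [Semiring R] [StarRing R] (u : ι → n → R) :
    (frameOperator u).IsHermitian := by
  simp only [IsHermitian, frameOperator, conjTranspose_sum, conjTranspose_vecMulVec, star_star]

variable [Fintype n]

theorem frameOperator_mulVec [Semiring R] [Star R] (u : ι → n → R) (x : n → R) :
    frameOperator u *ᵥ x = ∑ g, MulOpposite.op (star (u g) ⬝ᵥ x) • u g := by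
  simp only [frameOperator, sum_mulVec, vecMulVec_mulVec]

theorem frameOperator_orbit [DecidableEq n] {G : Type*} [Group G] [Fintype G] [Semiring R]
    [StarRing R] (ρ : G →* Matrix n n R) (hρ : ∀ g, (ρ g)ᴴ * ρ g = 1) (v : n → R) :
    frameOperator (fun g => ρ g *ᵥ v) = ∑ g, ρ g * vecMulVec v (star v) * ρ g⁻¹ := by
  refine Finset.sum_congr rfl fun g _ => ?_
  have hinv : (ρ g)ᴴ = ρ g⁻¹ :=
    left_inv_eq_right_inv (hρ g) (by rw [← map_mul, mul_inv_cancel, map_one])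
  rw [star_mulVec, mul_vecMulVec, vecMulVec_mul, hinv]

theorem commute_frameOperator_orbit [DecidableEq n] {G : Type*} [Group G] [Fintype G]
    [Semiring R] [StarRing R] (ρ : G →* Matrix n n R) (hρ : ∀ g, (ρ g)ᴴ * ρ g = 1)
    (v : n → R) (h : G) : Commute (ρ h) (frameOperator fun g => ρ g *ᵥ v) := by
  rw [frameOperator_orbit ρ hρ]
  exact ρ.commute_sum_mul_mul_inv _ h

theorem mulVec_mul_right [NonUnitalSemiring R] (A : Matrix n n R) (w : n → R) (c : R) :
    A *ᵥ (fun i => w i * c) = fun i => (A *ᵥ w) i * c := by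
  ext i
  simp only [mulVec, dotProduct, Finset.sum_mul, mul_assoc]

theorem eq_smul_one_of_commute_of_span [DecidableEq n] {K : Type*} [CommSemiring K] [Semiring R]
    [Algebra K R] {A : Matrix n n R} {U : ι → Matrix n n R} (hcomm : ∀ g, Commute (U g) A)
    {x₀ : n → R} {μ : K} (hx₀ : A *ᵥ x₀ = μ • x₀)
    (hspan : ∀ x, ∃ c : ι → R, x = ∑ g, fun i => (U g *ᵥ x₀) i * c g) :
    A = μ • (1 : Matrix n n R) := by
  have horbit : ∀ g, A *ᵥ (U g *ᵥ x₀) = μ • (U g *ᵥ x₀) := fun g => by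
    rw [mulVec_mulVec, ← (hcomm g).eq, ← mulVec_mulVec, hx₀, mulVec_smul]
  refine ext_of_mulVec_single fun j => ?_
  obtain ⟨c, hc⟩ := hspan (Pi.single j 1)
  rw [smul_mulVec, one_mulVec, hc, mulVec_sum, Finset.smul_sum]
  refine Finset.sum_congr rfl fun g _ => ?_
  rw [mulVec_mul_right, horbit]
  ext i
  simp only [Pi.smul_apply, smul_mul_assoc]

theorem inner_eq_re_dotProduct_star (x y : PiLp 2 fun _ : n => ℍ[ℝ]) :
    inner ℝ x y = (x.ofLp ⬝ᵥ star y.ofLp).re := by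
  simp only [PiLp.inner_apply, Quaternion.inner_def, dotProduct, Quaternion.re_sum, Pi.star_apply]

theorem IsHermitian.exists_mulVec_eq_real_smul [Nonempty n] {A : Matrix n n ℍ[ℝ]}
    (hA : A.IsHermitian) : ∃ (μ : ℝ) (x : n → ℍ[ℝ]), x ≠ 0 ∧ A *ᵥ x = μ • x := by
  let T := (WithLp.linearEquiv 2 ℝ (n → ℍ[ℝ])).symm.conj (mulVecBilin ℝ ℝ A)
  have hT : T.IsSymmetric := fun x y => by
    have hAy : star (A *ᵥ y.ofLp) = star y.ofLp ᵥ* A := by rw [star_mulVec, hA.eq]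
    change inner ℝ (WithLp.toLp 2 (A *ᵥ x.ofLp)) y = inner ℝ x (WithLp.toLp 2 (A *ᵥ y.ofLp))
    rw [inner_eq_re_dotProduct_star, inner_eq_re_dotProduct_star, Quaternion.re_dotProduct_comm,
      dotProduct_mulVec, Quaternion.re_dotProduct_comm, hAy]
  obtain ⟨μ, hμ⟩ : ∃ μ : ℝ, Module.End.HasEigenvalue T μ :=
    ⟨_, hT.hasEigenvalue_iSup_of_finiteDimensional⟩
  obtain ⟨x, hx⟩ := hμ.exists_hasEigenvector
  exact ⟨μ, x.ofLp, by simpa using hx.2, congrArg WithLp.ofLp hx.apply_eq_smul⟩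

end Matrix

section QuaternionFrame

variable {d : ℕ} {ι : Type*} [Fintype ι]

theorem coe_nsq_eq_star_dotProduct (v : Fin d → ℍ[ℝ]) :
    (nsq v : ℍ[ℝ]) = star v ⬝ᵥ v := by
  simp only [nsq, dotProduct, Pi.star_apply, Quaternion.star_mul_self, Quaternion.coe_sum]

theorem nsq_mulVec_of_conjTranspose_mul_self {M : Matrix (Fin d) (Fin d) ℍ[ℝ]}
    (hM : Mᴴ * M = 1) (v : Fin d → ℍ[ℝ]) : nsq (M *ᵥ v) = nsq v := by
  refine Quaternion.coe_injective ?_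
  rw [coe_nsq_eq_star_dotProduct, coe_nsq_eq_star_dotProduct, star_mulVec, ← dotProduct_mulVec,
    mulVec_mulVec, hM, one_mulVec]

theorem frameOperator_mulVec_eq_sum_qip (u : ι → Fin d → ℍ[ℝ]) (x : Fin d → ℍ[ℝ]) :
    frameOperator u *ᵥ x = fun i => ∑ g, u g i * qip x (u g) := by
  funext i
  simp only [frameOperator_mulVec, Finset.sum_apply, Pi.smul_apply, MulOpposite.smul_eq_mul_unop,
    MulOpposite.unop_op, qip, dotProduct, Pi.star_apply]

theorem trace_frameOperator (u : ι → Fin d → ℍ[ℝ]) :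
    trace (frameOperator u) = ∑ g, (nsq (u g) : ℍ[ℝ]) := by
  simp only [frameOperator, trace_sum, trace_vecMulVec, nsq, dotProduct, Pi.star_apply,
    Quaternion.self_mul_star, Quaternion.coe_sum]

theorem trace_frameOperator_orbit {G : Type*} [Group G] [Fintype G]
    (ρ : G →* Matrix (Fin d) (Fin d) ℍ[ℝ]) (hρ : ∀ g, (ρ g)ᴴ * ρ g = 1) (v : Fin d → ℍ[ℝ]) :
    trace (frameOperator fun g => ρ g *ᵥ v) = ((Fintype.card G * nsq v : ℝ) : ℍ[ℝ]) := by
  rw [trace_frameOperator, Quaternion.coe_mul, Quaternion.coe_natCast, ← nsmul_eq_mul,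
    ← Finset.card_univ, ← Finset.sum_const]
  simp only [nsq_mulVec_of_conjTranspose_mul_self (hρ _)]

end QuaternionFrame

/-- Irreducible quaternionic group actions give tight frames: if `ρ : G → ℍ^{d×d}` is
a unitary representation of a finite group `G` which is irreducible (the orbit of
every nonzero vector spans `ℍ^d` under right quaternionic scalar multiplication),
then for every nonzero `v`, the orbit `(ρ(g) v)_{g ∈ G}` is a tight frame:
`∑_g (ρ(g) v)·⟨x, ρ(g) v⟩ = (|G| ‖v‖²/d) x` for all `x`. -/
theorem irreducible_group_action_tight_frame (d : ℕ) (G : Type*) [Group G] [Fintype G]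
    (ρ : G →* Matrix (Fin d) (Fin d) ℍ[ℝ])
    (hunitary : ∀ g, (ρ g)ᴴ * ρ g = 1)
    (hirred : ∀ v : Fin d → ℍ[ℝ], v ≠ 0 →
      ∀ x : Fin d → ℍ[ℝ], ∃ c : G → ℍ[ℝ],
        x = ∑ g, (fun i => ((ρ g).mulVec v) i * c g))
    (v : Fin d → ℍ[ℝ]) (hv : v ≠ 0) :
    ∀ x : Fin d → ℍ[ℝ],
      (fun i => ∑ g, ((ρ g).mulVec v) i * qip x ((ρ g).mulVec v)) =
        (((Fintype.card G : ℝ) * nsq v) / (d : ℝ)) • x := by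
  have hd : d ≠ 0 := by
    rintro rfl
    exact hv (Subsingleton.elim _ _)
  have : NeZero d := ⟨hd⟩
  obtain ⟨μ, x₀, hx₀, hμx₀⟩ :=
    (isHermitian_frameOperator fun g => ρ g *ᵥ v).exists_mulVec_eq_real_smul
  have hS : (frameOperator fun g => ρ g *ᵥ v) = μ • 1 :=
    eq_smul_one_of_commute_of_span (commute_frameOperator_orbit ρ hunitary v) hμx₀
      (hirred x₀ hx₀)
  have hμ : μ = Fintype.card G * nsq v / d := by
    have htrace := trace_frameOperator_orbit ρ hunitary v
    rw [hS, trace_smul, trace_one, Fintype.card_fin, ← Quaternion.coe_natCast,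
      Quaternion.smul_coe] at htrace
    rw [← Quaternion.coe_injective htrace]
    field_simp
  intro x
  rw [← frameOperator_mulVec_eq_sum_qip, hS, smul_mulVec, one_mulVec, hμ]
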